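/- arXiv:1410.2386 — 3 statements merged into one kernel-verified Lean document; each statement's English description precedes it below -/
import Mathlib

section
/- Let {A⁽ⁿ⁾}ₙ₌₁ᴺ be random matrices, A⁽ⁿ⁾ ∈ ℝ^{Iₙ×R}, such that the matrices are mutually independent and, within each A⁽ⁿ⁾, the row vectors a⁽ⁿ⁾_{iₙ} are independent. Then E[(⊙ₙ A⁽ⁿ⁾)ᵀ(⊙ₙ A⁽ⁿ⁾)] = Σ_{i₁,…,i_N} ⊛ₙ E[a⁽ⁿ⁾_{iₙ} a⁽ⁿ⁾ᵀ_{iₙ}], where the sum ranges over all index tuples and ⊛ denotes the Hadamard product of R×R matrices. -/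
/-!
Each summand `∏ n, A⁽ⁿ⁾ᵢₙᵣ A⁽ⁿ⁾ᵢₙₛ` is a product of functions of the independent matrices `A⁽ⁿ⁾`,
so it is integrable and its expectation factors; linearity of expectation then moves the
integral inside the sum over index tuples.
-/

open MeasureTheory ProbabilityTheory

lemma ProbabilityTheory.iIndepFun.integrable_finsetProd {Ω ι 𝕜 : Type*} [MeasurableSpace Ω]
    [RCLike 𝕜] {μ : Measure Ω} {f : ι → Ω → 𝕜} (hf : iIndepFun f μ)
    (hint : ∀ i, Integrable (f i) μ) (s : Finset ι) : Integrable (∏ i ∈ s, f i) μ := by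
  classical
  have := hf.isProbabilityMeasure
  induction s using Finset.induction_on with
  | empty => exact integrable_const 1
  | insert a s ha ih =>
    rw [Finset.prod_insert ha, mul_comm]
    exact (hf.indepFun_finsetProd_of_notMem₀ (fun i => (hint i).aemeasurable) ha).integrable_mul
      ih (hint a)

theorem expected_khatriRao_gram_general
    {Ω : Type*} [MeasurableSpace Ω] (μ : Measure Ω)
    {N R : ℕ} {I : Fin N → ℕ}
    (A : ∀ n, Ω → Fin (I n) → Fin R → ℝ)
    (hindep : iIndepFun A μ)
    (hint : ∀ n (i : Fin (I n)) (r s : Fin R),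
      Integrable (fun ω => A n ω i r * A n ω i s) μ) :
    ∀ r s : Fin R,
      (∫ ω, ∑ i : ∀ n, Fin (I n), ∏ n, (A n ω (i n) r * A n ω (i n) s) ∂μ)
        = ∑ i : ∀ n, Fin (I n), ∏ n, ∫ ω, A n ω (i n) r * A n ω (i n) s ∂μ := by
  intro r s
  have hfactors (i : ∀ n, Fin (I n)) :
      iIndepFun (fun n ω => A n ω (i n) r * A n ω (i n) s) μ :=
    hindep.comp (fun n x => x (i n) r * x (i n) s) fun n => by fun_prop
  have hsummand (i : ∀ n, Fin (I n)) :
      Integrable (fun ω => ∏ n, (A n ω (i n) r * A n ω (i n) s)) μ := by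
    simpa only [Finset.prod_fn] using
      (hfactors i).integrable_finsetProd (fun n => hint n (i n) r s) Finset.univ
  rw [integral_finsetSum _ fun i _ => hsummand i]
  exact Finset.sum_congr rfl fun i _ =>
    (hfactors i).integral_fun_prod_eq_prod_integral fun n =>
      (hint n (i n) r s).aestronglyMeasurable

/-- Lemma 1: for mutually independent random factor matrices with independent rows,
the expected Gram matrix of their iterated Khatri-Rao product equals the sum over all
index tuples of the Hadamard products of the expected row outer products. -/
theorem expected_khatriRao_gram
    {Ω : Type*} [MeasurableSpace Ω] (μ : Measure Ω) [IsProbabilityMeasure μ]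
    {N R : ℕ} {I : Fin N → ℕ}
    (A : ∀ n, Ω → Fin (I n) → Fin R → ℝ)
    (hmeas : ∀ n, Measurable (A n))
    (hindep : iIndepFun A μ)
    (hrows : ∀ n, iIndepFun (fun i ω => A n ω i) μ)
    (hint : ∀ n (i : Fin (I n)) (r s : Fin R),
      Integrable (fun ω => A n ω i r * A n ω i s) μ) :
    ∀ r s : Fin R,
      (∫ ω, ∑ i : ∀ n, Fin (I n), ∏ n, (A n ω (i n) r * A n ω (i n) s) ∂μ)
        = ∑ i : ∀ n, Fin (I n), ∏ n, ∫ ω, A n ω (i n) r * A n ω (i n) s ∂μ :=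
  expected_khatriRao_gram_general μ A hindep hint
end

section
/- Let {A⁽ⁿ⁾}ₙ₌₁ᴺ be mutually independent random matrices A⁽ⁿ⁾ ∈ ℝ^{Iₙ×R} whose rows within each matrix are independent. Then E[ ‖⟦A⁽¹⁾,…,A⁽ᴺ⁾⟧‖²_F ] = Σ_{i₁,…,i_N} ⟨ E[a⁽¹⁾_{i₁} a⁽¹⁾ᵀ_{i₁}], …, E[a⁽ᴺ⁾_{i_N} a⁽ᴺ⁾ᵀ_{i_N}] ⟩, where ⟨·,…,·⟩ denotes the generalized inner product (sum of entrywise products) of the N matrices. -/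
open MeasureTheory ProbabilityTheory Finset

theorem sq_sum_prod_eq_sum_sum_prod_mul {ι κ R : Type*} [CommSemiring R]
    (u : Finset ι) (s : Finset κ) (a : ι → κ → R) :
    (∑ r ∈ s, ∏ n ∈ u, a n r) ^ 2 = ∑ r ∈ s, ∑ t ∈ s, ∏ n ∈ u, a n r * a n t := by
  simp_rw [sq, sum_mul_sum, prod_mul_distrib]

/-- The joint law is the product of the marginals, on which a product of integrable coordinate
functions is integrable. -/
theorem ProbabilityTheory.iIndepFun.integrable_fun_prod {Ω ι 𝕜 : Type*} [MeasurableSpace Ω]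
    {μ : Measure Ω} [Fintype ι] [RCLike 𝕜] {X : ι → Ω → 𝕜} (hX : iIndepFun X μ)
    (hint : ∀ i, Integrable (X i) μ) :
    Integrable (fun ω ↦ ∏ i, X i ω) μ := by
  have := hX.isProbabilityMeasure
  have mX : ∀ i, AEMeasurable (X i) μ := fun i ↦ (hint i).aemeasurable
  change Integrable ((fun x : ι → 𝕜 ↦ ∏ i, x i) ∘ fun ω i ↦ X i ω) μ
  rw [← integrable_map_measure (by fun_prop) (aemeasurable_pi_lambda _ mX),
    hX.map_fun_eq_pi_map mX]
  exact Integrable.fintype_prod fun i ↦ (integrable_map_measure aestronglyMeasurable_id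
    (mX i)).mpr (hint i)

theorem expected_cp_frobenius_sq_general
    {Ω : Type*} [MeasurableSpace Ω] (μ : Measure Ω)
    {N R : ℕ} {I : Fin N → ℕ}
    (A : ∀ n, Ω → Fin (I n) → Fin R → ℝ)
    (hindep : iIndepFun A μ)
    (hint : ∀ n (i : Fin (I n)) (r s : Fin R),
      Integrable (fun ω => A n ω i r * A n ω i s) μ) :
    (∫ ω, ∑ i : ∀ n, Fin (I n), (∑ r : Fin R, ∏ n, A n ω (i n) r) ^ 2 ∂μ)
      = ∑ i : ∀ n, Fin (I n), ∑ r : Fin R, ∑ s : Fin R,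
          ∏ n, ∫ ω, A n ω (i n) r * A n ω (i n) s ∂μ := by
  have hentries (i : ∀ n, Fin (I n)) (r s : Fin R) :
      iIndepFun (fun n ω ↦ A n ω (i n) r * A n ω (i n) s) μ :=
    hindep.comp (fun n x ↦ x (i n) r * x (i n) s) fun n ↦ by fun_prop
  have hterm (i : ∀ n, Fin (I n)) (r s : Fin R) :
      Integrable (fun ω ↦ ∏ n, A n ω (i n) r * A n ω (i n) s) μ :=
    (hentries i r s).integrable_fun_prod fun n ↦ hint n (i n) r s
  simp_rw [sq_sum_prod_eq_sum_sum_prod_mul]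
  rw [integral_finsetSum _ fun i _ ↦ integrable_finsetSum _ fun r _ ↦
    integrable_finsetSum _ fun s _ ↦ hterm i r s]
  refine sum_congr rfl fun i _ ↦ ?_
  rw [integral_finsetSum _ fun r _ ↦ integrable_finsetSum _ fun s _ ↦ hterm i r s]
  refine sum_congr rfl fun r _ ↦ ?_
  rw [integral_finsetSum _ fun s _ ↦ hterm i r s]
  exact sum_congr rfl fun s _ ↦ (hentries i r s).integral_fun_prod_eq_prod_integral
    fun n ↦ (hint n (i n) r s).aestronglyMeasurable

/-- Lemma 2: for mutually independent random factor matrices with independent rows, the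
expected squared Frobenius norm of the CP tensor equals the sum over all index tuples of
the generalized inner products of the expected row outer products. -/
theorem expected_cp_frobenius_sq
    {Ω : Type*} [MeasurableSpace Ω] (μ : Measure Ω) [IsProbabilityMeasure μ]
    {N R : ℕ} {I : Fin N → ℕ}
    (A : ∀ n, Ω → Fin (I n) → Fin R → ℝ)
    (hmeas : ∀ n, Measurable (A n))
    (hindep : iIndepFun A μ)
    (hrows : ∀ n, iIndepFun (fun i ω => A n ω i) μ)
    (hint : ∀ n (i : Fin (I n)) (r s : Fin R),
      Integrable (fun ω => A n ω i r * A n ω i s) μ) :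
    (∫ ω, ∑ i : ∀ n, Fin (I n), (∑ r : Fin R, ∏ n, A n ω (i n) r) ^ 2 ∂μ)
      = ∑ i : ∀ n, Fin (I n), ∑ r : Fin R, ∑ s : Fin R,
          ∏ n, ∫ ω, A n ω (i n) r * A n ω (i n) s ∂μ :=
  expected_cp_frobenius_sq_general μ A hindep hint
end

section
/- Let {A⁽ⁿ⁾}ₙ₌₁ᴺ be mutually independent random matrices A⁽ⁿ⁾ ∈ ℝ^{Iₙ×R} such that within each A⁽ⁿ⁾ the rows a⁽ⁿ⁾_{iₙ} are independent with a common covariance matrix Cov[a⁽ⁿ⁾_{iₙ}] = V⁽ⁿ⁾ for all iₙ. Then E[(⊙ₙ A⁽ⁿ⁾)ᵀ(⊙ₙ A⁽ⁿ⁾)] = ⊛ₙ E[A⁽ⁿ⁾ᵀA⁽ⁿ⁾], where E[A⁽ⁿ⁾ᵀA⁽ⁿ⁾] = E[A⁽ⁿ⁾]ᵀ E[A⁽ⁿ⁾] + Iₙ·V⁽ⁿ⁾. -/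
/-!
Each row contributes `E[aᵢ aᵢᵀ] = E[aᵢ] E[aᵢ]ᵀ + V` to `E[AᵀA]`, which gives the first identity.
The `(r, s)` entry of the Khatri-Rao Gram matrix is `∑ᵢ ∏ₙ Aₙ(iₙ, r) Aₙ(iₙ, s)`, which factors as
`∏ₙ (Aₙᵀ Aₙ)(r, s)`; each factor depends on `Aₙ` alone, so by independence of the `Aₙ` the
expectation of the product is the product of the expectations.
-/

open MeasureTheory ProbabilityTheory

section SecondMoments

variable {Ω : Type*} [MeasurableSpace Ω] {μ : Measure Ω} [IsProbabilityMeasure μ]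

lemma integral_mul_eq_mul_integral_add_covariance {X Y : Ω → ℝ}
    (hX : MemLp X 2 μ) (hY : MemLp Y 2 μ) :
    ∫ ω, X ω * Y ω ∂μ = (∫ ω, X ω ∂μ) * (∫ ω, Y ω ∂μ) + cov[X, Y; μ] := by
  rw [covariance_eq_sub hX hY]
  simp only [Pi.mul_apply]
  ring

lemma integral_sum_mul_eq_sum_mul_integral_add_card_mul {ι : Type*} [Fintype ι]
    {X Y : ι → Ω → ℝ} {c : ℝ} (hX : ∀ i, MemLp (X i) 2 μ) (hY : ∀ i, MemLp (Y i) 2 μ)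
    (hcov : ∀ i, cov[X i, Y i; μ] = c) :
    ∫ ω, ∑ i, X i ω * Y i ω ∂μ
      = (∑ i, (∫ ω, X i ω ∂μ) * ∫ ω, Y i ω ∂μ) + Fintype.card ι * c := by
  rw [integral_finsetSum (f := fun i ω => X i ω * Y i ω) _
    fun i _ => (hX i).integrable_mul (hY i)]
  simp only [integral_mul_eq_mul_integral_add_covariance (hX _) (hY _), hcov,
    Finset.sum_add_distrib, Finset.sum_const, Finset.card_univ, nsmul_eq_mul]

end SecondMoments

lemma ProbabilityTheory.iIndepFun.integral_sum_pi_prod_eq_prod_integral_sum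
    {Ω : Type*} [MeasurableSpace Ω] {μ : Measure Ω}
    {ι : Type*} [Fintype ι] [DecidableEq ι] {κ : ι → Type*} [∀ n, Fintype (κ n)]
    {β : ι → Type*} [∀ n, MeasurableSpace (β n)] {X : ∀ n, Ω → β n}
    (hX : iIndepFun X μ) (mX : ∀ n, Measurable (X n))
    {f : ∀ n, κ n → β n → ℝ} (hf : ∀ n k, Measurable (f n k)) :
    ∫ ω, ∑ k : ∀ n, κ n, ∏ n, f n (k n) (X n ω) ∂μ
      = ∏ n, ∫ ω, ∑ k, f n k (X n ω) ∂μ := by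
  have hexpand : ∀ ω, ∑ k : ∀ n, κ n, ∏ n, f n (k n) (X n ω) = ∏ n, ∑ k, f n k (X n ω) :=
    fun ω => (Fintype.prod_sum fun n k => f n k (X n ω)).symm
  simp_rw [hexpand]
  exact hX.integral_fun_prod_comp (f := fun n x => ∑ k, f n k x)
    (fun n => (mX n).aemeasurable)
    (fun n => (Finset.measurable_sum _ fun k _ => hf n k).aestronglyMeasurable)

theorem expected_khatriRao_gram_common_cov_general
    {Ω : Type*} [MeasurableSpace Ω] (μ : Measure Ω) [IsProbabilityMeasure μ]
    {N R : ℕ} {I : Fin N → ℕ}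
    (A : ∀ n, Ω → Fin (I n) → Fin R → ℝ)
    (V : ∀ _ : Fin N, Matrix (Fin R) (Fin R) ℝ)
    (hmeas : ∀ n, Measurable (A n))
    (hindep : iIndepFun A μ)
    (hint : ∀ n (i : Fin (I n)) (r s : Fin R),
      Integrable (fun ω => A n ω i r * A n ω i s) μ)
    (hcov : ∀ n (i : Fin (I n)) (r s : Fin R),
      ∫ ω, (A n ω i r - ∫ ω', A n ω' i r ∂μ) * (A n ω i s - ∫ ω', A n ω' i s ∂μ) ∂μ
        = V n r s) :
    (∀ n (r s : Fin R),
      (∫ ω, ∑ i : Fin (I n), A n ω i r * A n ω i s ∂μ)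
        = (∑ i : Fin (I n), (∫ ω, A n ω i r ∂μ) * ∫ ω, A n ω i s ∂μ)
            + (I n : ℝ) * V n r s)
    ∧ ∀ r s : Fin R,
      (∫ ω, ∑ i : ∀ n, Fin (I n), ∏ n, (A n ω (i n) r * A n ω (i n) s) ∂μ)
        = ∏ n, ∫ ω, ∑ i : Fin (I n), A n ω i r * A n ω i s ∂μ := by
  have hentry_memLp : ∀ n i r, MemLp (fun ω => A n ω i r) 2 μ := fun n i r =>
    (memLp_two_iff_integrable_sq (by fun_prop)).2 (by simpa only [sq] using hint n i r r)
  refine ⟨fun n r s => ?_, fun r s => ?_⟩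
  · simpa only [Fintype.card_fin] using
      integral_sum_mul_eq_sum_mul_integral_add_card_mul (hentry_memLp n · r)
        (hentry_memLp n · s) (hcov n · r s)
  · exact hindep.integral_sum_pi_prod_eq_prod_integral_sum hmeas
      (f := fun n i M => M i r * M i s) fun n i => by fun_prop

/-- Lemma 3: for mutually independent random factor matrices whose rows within each
matrix are independent with a common covariance `V n`, the expected Gram matrix of
their iterated Khatri-Rao product is the Hadamard product of the expected Gram
matrices, and `E[AᵀA] = E[A]ᵀE[A] + Iₙ·V`. -/
theorem expected_khatriRao_gram_common_cov
    {Ω : Type*} [MeasurableSpace Ω] (μ : Measure Ω) [IsProbabilityMeasure μ]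
    {N R : ℕ} {I : Fin N → ℕ}
    (A : ∀ n, Ω → Fin (I n) → Fin R → ℝ)
    (V : ∀ _ : Fin N, Matrix (Fin R) (Fin R) ℝ)
    (hmeas : ∀ n, Measurable (A n))
    (hindep : iIndepFun A μ)
    (hrows : ∀ n, iIndepFun (fun i ω => A n ω i) μ)
    (hint : ∀ n (i : Fin (I n)) (r s : Fin R),
      Integrable (fun ω => A n ω i r * A n ω i s) μ)
    (hcov : ∀ n (i : Fin (I n)) (r s : Fin R),
      ∫ ω, (A n ω i r - ∫ ω', A n ω' i r ∂μ) * (A n ω i s - ∫ ω', A n ω' i s ∂μ) ∂μ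
        = V n r s) :
    (∀ n (r s : Fin R),
      (∫ ω, ∑ i : Fin (I n), A n ω i r * A n ω i s ∂μ)
        = (∑ i : Fin (I n), (∫ ω, A n ω i r ∂μ) * ∫ ω, A n ω i s ∂μ)
            + (I n : ℝ) * V n r s)
    ∧ ∀ r s : Fin R,
      (∫ ω, ∑ i : ∀ n, Fin (I n), ∏ n, (A n ω (i n) r * A n ω (i n) s) ∂μ)
        = ∏ n, ∫ ω, ∑ i : Fin (I n), A n ω i r * A n ω i s ∂μ :=
  expected_khatriRao_gram_common_cov_general μ A V hmeas hindep hint hcov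
end
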